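/- Let d ≥ 1, σ > 0, ε₀ > 0, and let ρ(y) = (1 + σ|y|²)^{−(d+ε₀)/2}, ρ_x(y) = ρ(y − x). Let b : ℝ^d → ℝ^d be a measurable vector field with |b| ∈ L²_loc such that for some δ ≥ 0 and c ≥ 0, ∫_{ℝ^d} |b|² φ² dy ≤ δ ∫_{ℝ^d} |∇φ|² dy + c ∫_{ℝ^d} φ² dy for every bounded Lipschitz function φ : ℝ^d → ℝ with φ ∈ L²(ℝ^d) and |∇φ| ∈ L²(ℝ^d) (∇φ denoting the almost-everywhere defined gradient). Then for every x ∈ ℝ^d, ∫_{ℝ^d} |b(y)|² ρ_x(y) dy ≤ ( δ (d+ε₀)² σ / 16 + c ) ∫_{ℝ^d} ρ(y) dy < ∞. -/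

import Mathlib

open MeasureTheory ENNReal

noncomputable section

/-- The weight `ρ(y) = (1 + σ|y|²)^{-(d+ε₀)/2}` on `ℝ^d`. -/
def rhoWeight (d : ℕ) (σ ε₀ : ℝ) (y : EuclideanSpace ℝ (Fin d)) : ℝ :=
  (1 + σ * ‖y‖ ^ 2) ^ (-(((d : ℝ) + ε₀) / 2))

/-- Test functions: bounded Lipschitz functions `φ` with `φ ∈ L²` and `|∇φ| ∈ L²`
(the gradient being the almost-everywhere defined one, realized via `fderiv`). -/
def IsTestFn {d : ℕ} (φ : EuclideanSpace ℝ (Fin d) → ℝ) : Prop :=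
  (∃ L : NNReal, LipschitzWith L φ) ∧ (∃ M : ℝ, ∀ y, |φ y| ≤ M) ∧
    Integrable (fun y => φ y ^ 2) ∧ Integrable (fun y => ‖fderiv ℝ φ y‖ ^ 2)

/-! The square root `φ = ρ^{1/2}` of the weight satisfies `|∇φ|² ≤ (d+ε₀)² σ / 16 · ρ`, by the
AM-GM inequality `2 √σ |y| ≤ 1 + σ |y|²`. The truncations `(φ_x - ε)⁺` are compactly supported
test functions with `|∇(φ_x - ε)⁺| ≤ |∇φ_x|` and, unlike `φ_x`, they make `|b|² (φ_x - ε)⁺²`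
integrable (a Bochner integral is `0` otherwise). Hence form-boundedness bounds `∫ |b|² (φ_x - ε)⁺²`
by `δ (d+ε₀)² σ / 16 · ∫ ρ`, uniformly in `ε > 0`; Fatou's lemma lets `ε → 0`. -/

open Filter Topology Set

section Truncation

theorem norm_fderiv_max_sub_const_le {E : Type*} [NormedAddCommGroup E] [NormedSpace ℝ E]
    {f : E → ℝ} {y : E} (hf : ContinuousAt f y) (ε : ℝ) :
    ‖fderiv ℝ (fun z => max (f z - ε) 0) y‖ ≤ ‖fderiv ℝ f y‖ := by
  rcases lt_trichotomy (f y) ε with hlt | heq | hgt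
  · have hzero : (fun z => max (f z - ε) 0) =ᶠ[𝓝 y] fun _ => 0 := by
      filter_upwards [hf.eventually (gt_mem_nhds hlt)] with z hz
      exact max_eq_right (by linarith)
    simp [hzero.fderiv_eq]
  · have hmin : IsLocalMin (fun z => max (f z - ε) 0) y :=
      Eventually.of_forall fun z => by simp [heq]
    simp [hmin.fderiv_eq_zero]
  · have hsub : (fun z => max (f z - ε) 0) =ᶠ[𝓝 y] fun z => f z - ε := by
      filter_upwards [hf.eventually (lt_mem_nhds hgt)] with z hz
      exact max_eq_left (by linarith)
    rw [hsub.fderiv_eq, fderiv_sub_const]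

variable {X : Type*} [TopologicalSpace X] [T2Space X]

theorem hasCompactSupport_max_sub_const {f : X → ℝ} (hf : Tendsto f (cocompact X) (𝓝 0))
    {ε : ℝ} (hε : 0 < ε) : HasCompactSupport fun z => max (f z - ε) 0 := by
  obtain ⟨K, hK, hKf⟩ := mem_cocompact.mp (hf (Iio_mem_nhds hε))
  exact HasCompactSupport.intro hK fun z hz =>
    max_eq_right (by linarith [show f z < ε from hKf hz])

theorem LocallyIntegrable.integrable_mul_max_sub_const_sq [MeasurableSpace X]
    [OpensMeasurableSpace X] {μ : Measure X} {g f : X → ℝ} (hg : LocallyIntegrable g μ)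
    (hf : Continuous f) (hf0 : Tendsto f (cocompact X) (𝓝 0)) {ε : ℝ} (hε : 0 < ε) :
    Integrable (fun z => g z * max (f z - ε) 0 ^ 2) μ :=
  hg.integrable_smul_right_of_hasCompactSupport
    (((hf.sub continuous_const).max continuous_const).pow 2)
    (hasCompactSupport_max_sub_const hf0 hε).mul_left

end Truncation

section Integrals

variable {α : Type*} [MeasurableSpace α] {μ : Measure α}

theorem integral_add_const_le_of_measure_univ_eq_top (hμ : μ univ = ∞) {g : α → ℝ}
    (hg : Integrable g μ) (hg0 : 0 ≤ ∫ a, g a ∂μ) (k : ℝ) :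
    ∫ a, (g a + k) ∂μ ≤ ∫ a, g a ∂μ := by
  by_cases hgk : Integrable (fun a => g a + k) μ
  · have hk : Integrable (fun _ : α => k) μ :=
      (hgk.sub hg).congr (ae_of_all _ fun a => by simp)
    have hinf : ¬ IsFiniteMeasure μ := fun _ => measure_ne_top μ univ hμ
    obtain rfl : k = 0 := (integrable_const_iff.mp hk).resolve_right hinf
    simp
  · rwa [integral_undef hgk]

theorem lintegral_le_of_tendsto_of_eventually_le {ι : Type*} {u : Filter ι} [u.NeBot]
    [u.IsCountablyGenerated] {F : ι → α → ℝ≥0∞} {G : α → ℝ≥0∞} {C : ℝ≥0∞}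
    (hF : ∀ i, AEMeasurable (F i) μ) (hFG : ∀ᵐ a ∂μ, Tendsto (fun i => F i a) u (𝓝 (G a)))
    (hC : ∀ᶠ i in u, ∫⁻ a, F i a ∂μ ≤ C) : ∫⁻ a, G a ∂μ ≤ C :=
  calc ∫⁻ a, G a ∂μ = ∫⁻ a, liminf (fun i => F i a) u ∂μ :=
        lintegral_congr_ae (hFG.mono fun _ ha => ha.liminf_eq.symm)
    _ ≤ liminf (fun i => ∫⁻ a, F i a ∂μ) u := lintegral_liminf_le' hF
    _ ≤ C := liminf_le_of_frequently_le' hC.frequently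

end Integrals

section BracketWeight

variable {E : Type*} [NormedAddCommGroup E] {σ s : ℝ}

def bracketWeight (σ s : ℝ) (y : E) : ℝ := (1 + σ * ‖y‖ ^ 2) ^ (-s)

theorem bracketWeight_pos (hσ : 0 ≤ σ) (y : E) : 0 < bracketWeight σ s y := by
  unfold bracketWeight; positivity

theorem bracketWeight_le_one (hσ : 0 ≤ σ) (hs : 0 ≤ s) (y : E) : bracketWeight σ s y ≤ 1 :=
  Real.rpow_le_one_of_one_le_of_nonpos (le_add_of_nonneg_right (by positivity))
    (neg_nonpos.mpr hs)

theorem bracketWeight_sq (hσ : 0 ≤ σ) (y : E) :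
    bracketWeight σ s y ^ 2 = bracketWeight σ (2 * s) y := by
  rw [bracketWeight, bracketWeight, ← Real.rpow_natCast, ← Real.rpow_mul (by positivity)]
  ring_nf

theorem continuous_bracketWeight (hσ : 0 ≤ σ) : Continuous (bracketWeight (E := E) σ s) :=
  (continuous_const.add (continuous_const.mul (continuous_norm.pow 2))).rpow_const
    fun y => Or.inl (by positivity : (0 : ℝ) < 1 + σ * ‖y‖ ^ 2).ne'

theorem tendsto_bracketWeight_sub_cocompact [ProperSpace E] (hσ : 0 < σ) (hs : 0 < s) (x : E) :
    Tendsto (fun y => bracketWeight σ s (y - x)) (cocompact E) (𝓝 0) := by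
  have hbase : Tendsto (fun y : E => 1 + σ * ‖y‖ ^ 2) (cocompact E) atTop :=
    tendsto_atTop_add_const_left _ _
      (((tendsto_pow_atTop two_ne_zero).comp tendsto_norm_cocompact_atTop).const_mul_atTop hσ)
  exact ((tendsto_rpow_neg_atTop hs).comp hbase).comp
    (Homeomorph.subRight x).isClosedEmbedding.tendsto_cocompact

variable [InnerProductSpace ℝ E]

theorem hasFDerivAt_bracketWeight (hσ : 0 ≤ σ) (y : E) :
    HasFDerivAt (bracketWeight σ s)
      ((-s * (1 + σ * ‖y‖ ^ 2) ^ (-s - 1) * (2 * σ)) • innerSL ℝ y) y := by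
  have hbase : HasFDerivAt (fun z : E => 1 + σ * ‖z‖ ^ 2) ((2 * σ) • innerSL ℝ y) y := by
    refine (((hasFDerivAt_id y).norm_sq).const_mul σ).const_add 1 |>.congr_fderiv ?_
    ext v
    simp only [id_eq, ContinuousLinearMap.comp_id, smul_apply, coe_innerSL_apply, nsmul_eq_mul,
      Nat.cast_ofNat, smul_eq_mul]
    ring
  exact (hbase.rpow_const (p := -s) (Or.inl (by positivity))).congr_fderiv (by rw [smul_smul])

theorem norm_fderiv_bracketWeight_le (hσ : 0 ≤ σ) (hs : 0 ≤ s) (y : E) :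
    ‖fderiv ℝ (bracketWeight σ s) y‖ ≤ s * √σ * bracketWeight σ s y := by
  set u := 1 + σ * ‖y‖ ^ 2 with hu_def
  have hu : 0 < u := by positivity
  have amgm : 2 * σ * ‖y‖ ≤ √σ * u := by
    have hsquare : √σ * u - 2 * σ * ‖y‖ = √σ * (1 - √σ * ‖y‖) ^ 2 := by
      linear_combination (2 * ‖y‖ - √σ * ‖y‖ ^ 2) * Real.sq_sqrt hσ
    nlinarith [mul_nonneg (Real.sqrt_nonneg σ) (sq_nonneg (1 - √σ * ‖y‖))]
  have hw : 0 < u ^ (-s) := Real.rpow_pos_of_pos hu _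
  rw [(hasFDerivAt_bracketWeight hσ y).fderiv, norm_smul, innerSL_apply_norm, Real.norm_eq_abs,
    Real.rpow_sub_one hu.ne']
  calc |-s * (u ^ (-s) / u) * (2 * σ)| * ‖y‖ = s * (u ^ (-s) / u) * (2 * σ * ‖y‖) := by
        rw [abs_of_nonpos (mul_nonpos_of_nonpos_of_nonneg
          (mul_nonpos_of_nonpos_of_nonneg (neg_nonpos.mpr hs) (div_pos hw hu).le) (by positivity))]
        ring
    _ ≤ s * (u ^ (-s) / u) * (√σ * u) := by gcongr
    _ = s * √σ * u ^ (-s) := by field_simp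

theorem lipschitzWith_bracketWeight (hσ : 0 ≤ σ) (hs : 0 ≤ s) :
    LipschitzWith (s * √σ).toNNReal (bracketWeight (E := E) σ s) := by
  refine lipschitzWith_of_nnnorm_fderiv_le
    (fun y => (hasFDerivAt_bracketWeight hσ y).differentiableAt) fun y => ?_
  rw [← NNReal.coe_le_coe, coe_nnnorm, Real.coe_toNNReal _ (by positivity)]
  calc _ ≤ s * √σ * bracketWeight σ s y := norm_fderiv_bracketWeight_le hσ hs y
    _ ≤ s * √σ := mul_le_of_le_one_right (by positivity) (bracketWeight_le_one hσ hs y)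

theorem integrable_bracketWeight [FiniteDimensional ℝ E] [MeasurableSpace E] [BorelSpace E]
    (μ : Measure E) [μ.IsAddHaarMeasure] (hσ : 0 < σ) (hs : (Module.finrank ℝ E : ℝ) < 2 * s) :
    Integrable (bracketWeight σ s) μ := by
  have h := (integrable_comp_smul_iff μ (fun y : E => (1 + ‖y‖ ^ 2) ^ (-(2 * s) / 2))
    (Real.sqrt_pos.mpr hσ).ne').mpr (integrable_rpow_neg_one_add_norm_sq hs)
  convert h using 2 with y
  rw [bracketWeight, norm_smul, mul_pow, Real.norm_eq_abs, sq_abs, Real.sq_sqrt hσ.le]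
  ring_nf

end BracketWeight

section FormBound

variable {d : ℕ} {σ ε₀ : ℝ}

theorem rhoWeight_eq_sq (hσ : 0 ≤ σ) (y : EuclideanSpace ℝ (Fin d)) :
    rhoWeight d σ ε₀ y = bracketWeight σ (((d : ℝ) + ε₀) / 4) y ^ 2 := by
  rw [bracketWeight_sq hσ, show 2 * (((d : ℝ) + ε₀) / 4) = ((d : ℝ) + ε₀) / 2 by ring]
  rfl

theorem integrable_rhoWeight (hσ : 0 < σ) (hε₀ : 0 < ε₀) : Integrable (rhoWeight d σ ε₀) :=
  integrable_bracketWeight volume hσ (by rw [finrank_euclideanSpace_fin]; linarith)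

theorem EuclideanSpace.volume_univ_eq_top (hd : 1 ≤ d) :
    (volume : Measure (EuclideanSpace ℝ (Fin d))) univ = ∞ :=
  have : Nonempty (Fin d) := ⟨⟨0, hd⟩⟩
  measure_univ_of_isAddLeftInvariant _

theorem isTestFn_max_sub_const {f : EuclideanSpace ℝ (Fin d) → ℝ} {L : NNReal}
    (hf : LipschitzWith L f) (hf0 : Tendsto f (cocompact _) (𝓝 0))
    (hdf : Integrable fun y => ‖fderiv ℝ f y‖ ^ 2) {ε : ℝ} (hε : 0 < ε) :
    IsTestFn fun y => max (f y - ε) 0 := by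
  have hcont : Continuous fun y => max (f y - ε) 0 :=
    (hf.continuous.sub continuous_const).max continuous_const
  have hsupp := hasCompactSupport_max_sub_const hf0 hε
  refine ⟨⟨L, LipschitzWith.max_const (fun a b => ?_) 0⟩, ?_, ?_, ?_⟩
  · rw [edist_sub_right]
    exact hf a b
  · simpa only [Real.norm_eq_abs] using hsupp.exists_bound_of_continuous hcont
  · exact (hcont.pow 2).integrable_of_hasCompactSupport hsupp.mul_left
  · refine hdf.mono' ((measurable_fderiv ℝ _).norm.pow_const 2).aestronglyMeasurable
      (ae_of_all _ fun y => ?_)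
    rw [Real.norm_eq_abs, abs_of_nonneg (by positivity)]
    exact pow_le_pow_left₀ (norm_nonneg _)
      (norm_fderiv_max_sub_const_le hf.continuous.continuousAt ε) 2

theorem integral_norm_sq_mul_sq_le_of_formBound (hd : 1 ≤ d) {δ c : ℝ} (hδ : 0 ≤ δ)
    {b : EuclideanSpace ℝ (Fin d) → EuclideanSpace ℝ (Fin d)}
    (hfb : ∀ φ : EuclideanSpace ℝ (Fin d) → ℝ, IsTestFn φ →
      ∫ y, ‖b y‖ ^ 2 * φ y ^ 2 ≤
        δ * ∫ y, ‖fderiv ℝ φ y‖ ^ 2 + c * ∫ y, φ y ^ 2)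
    {φ : EuclideanSpace ℝ (Fin d) → ℝ} (hφ : IsTestFn φ) :
    ∫ y, ‖b y‖ ^ 2 * φ y ^ 2 ≤ δ * ∫ y, ‖fderiv ℝ φ y‖ ^ 2 :=
  -- The binder of the first integral in `hfb` also covers `c * ∫ y, φ y ^ 2`; on a space of
  -- infinite measure that integral is `∫ y, ‖fderiv ℝ φ y‖ ^ 2` or the junk value `0`.
  (hfb φ hφ).trans <| mul_le_mul_of_nonneg_left
    (integral_add_const_le_of_measure_univ_eq_top (EuclideanSpace.volume_univ_eq_top hd)
      hφ.2.2.2 (integral_nonneg fun _ => by positivity) _) hδ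

theorem sq_norm_fderiv_bracketWeight_sub_le (hσ : 0 ≤ σ) (hε₀ : 0 ≤ ε₀)
    (x y : EuclideanSpace ℝ (Fin d)) :
    ‖fderiv ℝ (fun z => bracketWeight σ (((d : ℝ) + ε₀) / 4) (z - x)) y‖ ^ 2 ≤
      ((d : ℝ) + ε₀) ^ 2 * σ / 16 * rhoWeight d σ ε₀ (y - x) := by
  set s : ℝ := ((d : ℝ) + ε₀) / 4
  have hs : 0 ≤ s := by positivity
  rw [rhoWeight_eq_sq hσ, fderiv_comp_sub]
  calc ‖fderiv ℝ (bracketWeight σ s) (y - x)‖ ^ 2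
      ≤ (s * √σ * bracketWeight σ s (y - x)) ^ 2 :=
        pow_le_pow_left₀ (norm_nonneg _) (norm_fderiv_bracketWeight_le hσ hs _) 2
    _ = ((d : ℝ) + ε₀) ^ 2 * σ / 16 * bracketWeight σ s (y - x) ^ 2 := by
      rw [mul_pow, mul_pow, Real.sq_sqrt hσ]
      ring

theorem integral_norm_sq_mul_truncation_sq_le (hd : 1 ≤ d) (hσ : 0 < σ) (hε₀ : 0 < ε₀)
    {δ c : ℝ} (hδ : 0 ≤ δ) {b : EuclideanSpace ℝ (Fin d) → EuclideanSpace ℝ (Fin d)}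
    (hfb : ∀ φ : EuclideanSpace ℝ (Fin d) → ℝ, IsTestFn φ →
      ∫ y, ‖b y‖ ^ 2 * φ y ^ 2 ≤
        δ * ∫ y, ‖fderiv ℝ φ y‖ ^ 2 + c * ∫ y, φ y ^ 2)
    (x : EuclideanSpace ℝ (Fin d)) {ε : ℝ} (hε : 0 < ε) :
    ∫ y, ‖b y‖ ^ 2 * max (bracketWeight σ (((d : ℝ) + ε₀) / 4) (y - x) - ε) 0 ^ 2 ≤
      δ * ((d : ℝ) + ε₀) ^ 2 * σ / 16 * ∫ y, rhoWeight d σ ε₀ y := by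
  set φ : EuclideanSpace ℝ (Fin d) → ℝ := fun y => bracketWeight σ (((d : ℝ) + ε₀) / 4) (y - x)
  have hs : 0 < ((d : ℝ) + ε₀) / 4 := by positivity
  have hρ : Integrable fun y => rhoWeight d σ ε₀ (y - x) :=
    (integrable_rhoWeight hσ hε₀).comp_sub_right x
  have hgrad := sq_norm_fderiv_bracketWeight_sub_le hσ.le hε₀.le x
  have hdφ : Integrable fun y => ‖fderiv ℝ φ y‖ ^ 2 :=
    (hρ.const_mul _).mono' ((measurable_fderiv ℝ _).norm.pow_const 2).aestronglyMeasurable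
      (ae_of_all _ fun y => by rw [Real.norm_eq_abs, abs_of_nonneg (by positivity)]; exact hgrad y)
  have hψ := isTestFn_max_sub_const
    ((lipschitzWith_bracketWeight hσ.le hs.le).comp (IsometryEquiv.subRight x).isometry.lipschitz)
    (tendsto_bracketWeight_sub_cocompact hσ hs x) hdφ hε
  calc ∫ y, ‖b y‖ ^ 2 * max (φ y - ε) 0 ^ 2
      ≤ δ * ∫ y, ‖fderiv ℝ (fun z => max (φ z - ε) 0) y‖ ^ 2 :=
        integral_norm_sq_mul_sq_le_of_formBound hd hδ hfb hψ
    _ ≤ δ * ∫ y, ((d : ℝ) + ε₀) ^ 2 * σ / 16 * rhoWeight d σ ε₀ (y - x) := by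
        refine mul_le_mul_of_nonneg_left (integral_mono_of_nonneg
          (ae_of_all _ fun y => by positivity) (hρ.const_mul _) (ae_of_all _ fun y => ?_)) hδ
        exact (pow_le_pow_left₀ (norm_nonneg _) (norm_fderiv_max_sub_const_le
          ((continuous_bracketWeight hσ.le).comp (continuous_sub_right x)).continuousAt ε) 2).trans
          (hgrad y)
    _ = δ * ((d : ℝ) + ε₀) ^ 2 * σ / 16 * ∫ y, rhoWeight d σ ε₀ y := by
        rw [integral_const_mul, integral_sub_right_eq_self]
        ring

end FormBound

/-- Global weighted `L²` summability of a form-bounded vector field: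
`∫ |b|² ρ_x ≤ (δ (d+ε₀)² σ / 16 + c) ∫ ρ < ∞`. -/
theorem form_bounded_global_weighted_L2
    (d : ℕ) (hd : 1 ≤ d) (σ ε₀ : ℝ) (hσ : 0 < σ) (hε : 0 < ε₀)
    (δ c : ℝ) (hδ : 0 ≤ δ) (hc : 0 ≤ c)
    (b : EuclideanSpace ℝ (Fin d) → EuclideanSpace ℝ (Fin d))
    (hbloc : LocallyIntegrable (fun y => ‖b y‖ ^ 2) volume)
    (hfb : ∀ φ : EuclideanSpace ℝ (Fin d) → ℝ, IsTestFn φ →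
      ∫ y, ‖b y‖ ^ 2 * φ y ^ 2 ≤
        δ * ∫ y, ‖fderiv ℝ φ y‖ ^ 2 + c * ∫ y, φ y ^ 2) :
    ∀ x : EuclideanSpace ℝ (Fin d),
      (∫⁻ y, ENNReal.ofReal (‖b y‖ ^ 2 * rhoWeight d σ ε₀ (y - x)))
          ≤ ENNReal.ofReal (δ * ((d : ℝ) + ε₀) ^ 2 * σ / 16 + c) *
              ∫⁻ y, ENNReal.ofReal (rhoWeight d σ ε₀ y)
        ∧ ENNReal.ofReal (δ * ((d : ℝ) + ε₀) ^ 2 * σ / 16 + c) *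
              (∫⁻ y, ENNReal.ofReal (rhoWeight d σ ε₀ y)) < ⊤ := by
  intro x
  set φ : EuclideanSpace ℝ (Fin d) → ℝ := fun y => bracketWeight σ (((d : ℝ) + ε₀) / 4) (y - x)
  have hφ : Continuous φ := (continuous_bracketWeight hσ.le).comp (continuous_sub_right x)
  have hρ := integrable_rhoWeight (d := d) hσ hε
  have hρ0' (y) : 0 ≤ rhoWeight d σ ε₀ y := (bracketWeight_pos hσ.le y).le
  have hρ0 : 0 ≤ ∫ y, rhoWeight d σ ε₀ y := integral_nonneg hρ0'
  have hρ_lint : ∫⁻ y, ENNReal.ofReal (rhoWeight d σ ε₀ y) =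
      ENNReal.ofReal (∫ y, rhoWeight d σ ε₀ y) :=
    (ofReal_integral_eq_lintegral_ofReal hρ (ae_of_all _ fun y => hρ0' y)).symm
  have hlim (y) : Tendsto (fun ε => ENNReal.ofReal (‖b y‖ ^ 2 * max (φ y - ε) 0 ^ 2)) (𝓝[>] 0)
      (𝓝 (ENNReal.ofReal (‖b y‖ ^ 2 * rhoWeight d σ ε₀ (y - x)))) := by
    have hcont : Continuous fun ε => ENNReal.ofReal (‖b y‖ ^ 2 * max (φ y - ε) 0 ^ 2) :=
      ENNReal.continuous_ofReal.comp (by fun_prop)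
    convert (hcont.tendsto 0).mono_left nhdsWithin_le_nhds using 3
    rw [sub_zero, max_eq_left (bracketWeight_pos hσ.le _).le, rhoWeight_eq_sq hσ.le]
  refine ⟨lintegral_le_of_tendsto_of_eventually_le (fun ε => ?_) (ae_of_all _ hlim)
    (eventually_nhdsWithin_of_forall fun ε hε' => ?_), mul_lt_top ofReal_lt_top hρ.lintegral_lt_top⟩
  · exact (hbloc.aestronglyMeasurable.aemeasurable.mul
      ((hφ.sub continuous_const).max continuous_const |>.pow 2).aemeasurable).ennreal_ofReal
  · have hint := LocallyIntegrable.integrable_mul_max_sub_const_sq hbloc hφ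
      (tendsto_bracketWeight_sub_cocompact hσ (by positivity) x) hε'
    rw [← ofReal_integral_eq_lintegral_ofReal hint (ae_of_all _ fun y => by positivity), hρ_lint,
      ← ofReal_mul (by positivity)]
    refine ofReal_le_ofReal
      ((integral_norm_sq_mul_truncation_sq_le hd hσ hε hδ hfb x hε').trans ?_)
    nlinarith
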